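/- If G is a connected graph with exactly two main signless Laplacian eigenvalues μ₁ and μ₂, then setting a = μ₁ + μ₂ and b = μ₁μ₂/2, one has s(v) = −d(v)² + a·d(v) − b for every vertex v of G, and a and b are integers with a > 0, b ≥ 0, and a² − 8b > 0. -/

import Mathlib

open Matrix Finset

/-- The signless Laplacian matrix `Q = D + A` of a simple graph. -/
def signlessLaplacian {n : ℕ} (G : SimpleGraph (Fin n)) [DecidableRel G.Adj] :
    Matrix (Fin n) (Fin n) ℝ :=
  G.degMatrix ℝ + G.adjMatrix ℝ

/-- `μ` is an eigenvalue of `M`. -/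
def IsEig {n : ℕ} (M : Matrix (Fin n) (Fin n) ℝ) (μ : ℝ) : Prop :=
  ∃ x : Fin n → ℝ, x ≠ 0 ∧ M.mulVec x = μ • x

/-- `μ` is a main eigenvalue of `M`: it has an eigenvector whose entry sum is nonzero. -/
def IsMainEig {n : ℕ} (M : Matrix (Fin n) (Fin n) ℝ) (μ : ℝ) : Prop :=
  ∃ x : Fin n → ℝ, x ≠ 0 ∧ M.mulVec x = μ • x ∧ ∑ i, x i ≠ 0

/-- `s(v)`: the sum of degrees of the neighbours of `v` (number of 2-walks from `v`). -/
def walkSum {n : ℕ} (G : SimpleGraph (Fin n)) [DecidableRel G.Adj] (v : Fin n) : ℕ :=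
  ∑ u ∈ G.neighborFinset v, G.degree u

/-- The pair `(a, b)` witnesses that `G` is 2-walk parabolic:
`a` positive, `a² − 8b > 0` and `s(v) = −d(v)² + a·d(v) − b` for all `v`. -/
def ParabolicPair {n : ℕ} (G : SimpleGraph (Fin n)) [DecidableRel G.Adj] (p : ℕ × ℕ) : Prop :=
  0 < p.1 ∧ (p.1 : ℤ) ^ 2 - 8 * p.2 > 0 ∧
    ∀ v, (walkSum G v : ℤ) = -(G.degree v : ℤ) ^ 2 + p.1 * G.degree v - p.2

section aux
variable {n : ℕ} (G : SimpleGraph (Fin n)) [DecidableRel G.Adj]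

lemma sl_isHermitian : (signlessLaplacian G).IsHermitian := by
  rw [Matrix.IsHermitian, conjTranspose_eq_transpose_of_trivial]
  exact (G.isSymm_degMatrix (R := ℝ)).add (G.isSymm_adjMatrix (α := ℝ))

lemma sl_mulVec_apply (v : Fin n) (x : Fin n → ℝ) :
    (signlessLaplacian G *ᵥ x) v = G.degree v * x v + ∑ u ∈ G.neighborFinset v, x u := by
  simp [signlessLaplacian, add_mulVec, SimpleGraph.degMatrix_mulVec_apply,
    SimpleGraph.adjMatrix_mulVec_apply]

lemma sl_quadform (x : Fin n → ℝ) :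
    x ⬝ᵥ (signlessLaplacian G *ᵥ x) =
      (∑ i : Fin n, ∑ j : Fin n, if G.Adj i j then (x i + x j) ^ 2 else 0) / 2 := by
  simp_rw [signlessLaplacian, add_mulVec, dotProduct_add,
    SimpleGraph.dotProduct_mulVec_degMatrix, SimpleGraph.dotProduct_mulVec_adjMatrix,
    SimpleGraph.degree_eq_sum_if_adj, sum_mul, ite_mul, one_mul, zero_mul,
    ← sum_add_distrib, ite_add_ite, add_zero]
  rw [← add_self_div_two (∑ i : Fin n, ∑ j : Fin n, _)]
  conv_lhs => enter [1, 2, 2, i, 2, j]; rw [if_congr (G.adj_comm i j) rfl rfl]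
  conv_lhs => enter [1, 2]; rw [Finset.sum_comm]
  simp_rw [← sum_add_distrib, ite_add_ite]
  congr 2 with i
  congr 2 with j
  ring_nf

lemma sl_eig_nonneg {μ : ℝ} (h : IsEig (signlessLaplacian G) μ) : 0 ≤ μ := by
  obtain ⟨x, hx0, hx⟩ := h
  have hq : 0 ≤ x ⬝ᵥ (signlessLaplacian G *ᵥ x) := by
    rw [sl_quadform]
    apply div_nonneg _ (by norm_num)
    refine sum_nonneg fun i _ => sum_nonneg fun j _ => ?_
    split <;> positivity
  rw [hx] at hq
  have hxx : 0 < x ⬝ᵥ x := by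
    rcases lt_or_eq_of_le (Finset.sum_nonneg fun i _ => mul_self_nonneg (x i)) with h | h
    · exact h
    · exact absurd (dotProduct_self_eq_zero.mp h.symm) hx0
  rw [dotProduct_smul, smul_eq_mul] at hq
  nlinarith
end aux

section key
variable {n : ℕ} (G : SimpleGraph (Fin n)) [DecidableRel G.Adj]

lemma sl_funceq (μ₁ μ₂ : ℝ)
    (hmain : ∀ μ, IsMainEig (signlessLaplacian G) μ → (μ = μ₁ ∨ μ = μ₂)) (v : Fin n) :
    2 * (walkSum G v : ℝ) + 2 * (G.degree v : ℝ) ^ 2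
      = (μ₁ + μ₂) * (2 * (G.degree v : ℝ)) - μ₁ * μ₂ := by
  classical
  set Q := signlessLaplacian G with hQdef
  have hQ := sl_isHermitian G
  set b := hQ.eigenvectorBasis with hb
  set lam := hQ.eigenvalues with hlam
  set E1 : EuclideanSpace ℝ (Fin n) := WithLp.toLp 2 (fun _ => 1) with hE1
  set L : (Fin n → ℝ) →ₗ[ℝ] (Fin n → ℝ) :=
    Q.mulVecLin ∘ₗ Q.mulVecLin - (μ₁ + μ₂) • Q.mulVecLin + (μ₁ * μ₂) • LinearMap.id with hL
  have hLb : ∀ i, L ⇑(b i) = ((lam i - μ₁) * (lam i - μ₂)) • ⇑(b i) := by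
    intro i
    have h1 := hQ.mulVec_eigenvectorBasis i
    change Q *ᵥ (b i).ofLp = lam i • (b i).ofLp at h1
    simp only [hL, LinearMap.add_apply, LinearMap.sub_apply, LinearMap.comp_apply,
      LinearMap.smul_apply, LinearMap.id_apply, mulVecLin_apply, h1, mulVec_smul]
    funext j
    simp only [Pi.add_apply, Pi.sub_apply, Pi.smul_apply, smul_eq_mul]
    ring
  have hcoef : ∀ i, (b.repr E1 i * ((lam i - μ₁) * (lam i - μ₂))) = 0 := by
    intro i
    rcases eq_or_ne (b.repr E1 i) 0 with h | h
    · rw [h, zero_mul]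
    · have hrepr := (b.repr_apply_apply E1 i).symm
      rw [PiLp.inner_apply] at hrepr
      have hsum : ∑ j, (b i) j ≠ 0 := by
        rw [← hrepr] at h
        simpa [hE1, RCLike.inner_apply, starRingEnd_apply] using h
      have hm : IsMainEig Q (lam i) :=
        ⟨⇑(b i), fun h0 => b.orthonormal.ne_zero i (by ext j; exact congrFun h0 j),
          hQ.mulVec_eigenvectorBasis i, hsum⟩
      rcases hmain _ hm with h' | h' <;> rw [h'] <;> ring
  have hsum_repr : ∑ i, b.repr E1 i • ⇑(b i) = fun _ => (1:ℝ) :=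
    by have := congrArg WithLp.ofLp (b.sum_repr E1); simpa [hE1] using this
  have hL1 : L (fun _ => 1) = 0 := by
    rw [← hsum_repr, map_sum]
    refine Finset.sum_eq_zero fun i _ => ?_
    rw [LinearMap.map_smul, hLb, smul_smul, hcoef i, zero_smul]
  have h1 : Q *ᵥ (fun _ => 1) = fun w => 2 * (G.degree w : ℝ) := by
    funext w
    rw [sl_mulVec_apply]
    simp [two_mul]
  have h2 := congrFun hL1 v
  simp only [hL, LinearMap.add_apply, LinearMap.sub_apply, LinearMap.comp_apply,
    LinearMap.smul_apply, LinearMap.id_apply, mulVecLin_apply, h1, Pi.add_apply,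
    Pi.sub_apply, Pi.smul_apply, smul_eq_mul, Pi.zero_apply] at h2
  rw [sl_mulVec_apply] at h2
  have hws : (walkSum G v : ℝ) = ∑ u ∈ G.neighborFinset v, (G.degree u : ℝ) := by
    rw [walkSum]; push_cast; rfl
  have hsum2 : ∑ u ∈ G.neighborFinset v, 2 * (G.degree u : ℝ)
      = 2 * (walkSum G v : ℝ) := by
    rw [hws, Finset.mul_sum]
  rw [hsum2] at h2
  nlinarith [h2]
end key

section int
variable {n : ℕ} (G : SimpleGraph (Fin n)) [DecidableRel G.Adj]

lemma sl_int_map :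
    (G.degMatrix ℤ + G.adjMatrix ℤ).map (Int.cast : ℤ → ℝ) = signlessLaplacian G := by
  ext i j
  simp [signlessLaplacian, SimpleGraph.degMatrix, Matrix.diagonal, Matrix.map_apply,
    apply_ite (Int.cast : ℤ → ℝ)]

lemma sl_eig_isIntegral {μ : ℝ} (h : IsEig (signlessLaplacian G) μ) : IsIntegral ℤ μ := by
  obtain ⟨x, hx0, hx⟩ := h
  set M := G.degMatrix ℤ + G.adjMatrix ℤ with hM
  refine ⟨M.charpoly, M.charpoly_monic, ?_⟩
  rw [Polynomial.eval₂_eq_eval_map, ← Matrix.charpoly_map]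
  have hmap : M.map (algebraMap ℤ ℝ) = signlessLaplacian G := sl_int_map G
  rw [hmap]
  -- eval μ of charpoly = det (μ • 1 - Q)
  have hdet : ((signlessLaplacian G).charmatrix.map (Polynomial.evalRingHom μ))
      = μ • (1 : Matrix (Fin n) (Fin n) ℝ) - signlessLaplacian G := by
    ext i j
    rcases eq_or_ne i j with rfl | hij
    · simp [Matrix.charmatrix_apply_eq, Matrix.map_apply]
    · simp [Matrix.charmatrix_apply_ne _ _ _ hij, Matrix.map_apply, Matrix.one_apply_ne hij,
        Matrix.smul_apply, hij]
  have h0 : (μ • (1 : Matrix (Fin n) (Fin n) ℝ) - signlessLaplacian G).det = 0 := by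
    rw [← Matrix.exists_mulVec_eq_zero_iff]
    refine ⟨x, hx0, ?_⟩
    rw [Matrix.sub_mulVec, Matrix.smul_mulVec, Matrix.one_mulVec, hx, sub_self]
  calc Polynomial.eval μ (signlessLaplacian G).charpoly
      = (Polynomial.evalRingHom μ) ((signlessLaplacian G).charmatrix.det) := rfl
    _ = ((signlessLaplacian G).charmatrix.map (Polynomial.evalRingHom μ)).det :=
        RingHom.map_det _ _
    _ = 0 := by rw [hdet, h0]

lemma rat_integral_int {q : ℚ} (h : IsIntegral ℤ ((q : ℝ))) : ∃ z : ℤ, (q : ℚ) = (z : ℚ) := by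
  have h2 : IsIntegral ℤ q := by
    apply (isIntegral_algHom_iff ((algebraMap ℚ ℝ).toIntAlgHom)
      (algebraMap ℚ ℝ).injective).mp
    simpa [RingHom.toIntAlgHom, eq_ratCast] using h
  obtain ⟨z, hz⟩ := IsIntegrallyClosed.isIntegral_iff.mp h2
  exact ⟨z, by exact_mod_cast hz.symm⟩

lemma sl_nonregular (hconn : G.Connected) (μ₁ μ₂ : ℝ) (hne : μ₁ ≠ μ₂)
    (hmain : ∀ μ, IsMainEig (signlessLaplacian G) μ ↔ (μ = μ₁ ∨ μ = μ₂)) :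
    ∃ v w, G.degree v ≠ G.degree w := by
  by_contra hreg
  push_neg at hreg
  obtain ⟨v0⟩ := hconn.nonempty
  have h1 : signlessLaplacian G *ᵥ (fun _ => 1) = fun w => 2 * (G.degree w : ℝ) := by
    funext w; rw [sl_mulVec_apply]; simp [two_mul]
  have key : ∀ μ, IsMainEig (signlessLaplacian G) μ → μ = 2 * (G.degree v0 : ℝ) := by
    intro μ ⟨x, hx0, hx, hsum⟩
    have e1 : (fun _ => (1:ℝ)) ⬝ᵥ (signlessLaplacian G *ᵥ x) = μ * ∑ i, x i := by
      rw [hx, dotProduct_smul]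
      simp [dotProduct, Finset.mul_sum]
    have e2 : (fun _ => (1:ℝ)) ⬝ᵥ (signlessLaplacian G *ᵥ x)
        = 2 * (G.degree v0 : ℝ) * ∑ i, x i := by
      rw [Matrix.dotProduct_mulVec]
      have hsymm : (signlessLaplacian G)ᵀ = signlessLaplacian G :=
        (Matrix.IsSymm.add (G.isSymm_degMatrix (R := ℝ)) (G.isSymm_adjMatrix (α := ℝ)))
      have : (fun _ => (1:ℝ)) ᵥ* signlessLaplacian G = fun w => 2 * (G.degree w : ℝ) := by
        rw [← hsymm, Matrix.vecMul_transpose, h1]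
      rw [this]
      simp [dotProduct, hreg _ v0, Finset.mul_sum]
    have := e1.symm.trans e2
    exact mul_right_cancel₀ hsum this
  have hA := key μ₁ ((hmain μ₁).mpr (Or.inl rfl))
  have hB := key μ₂ ((hmain μ₂).mpr (Or.inr rfl))
  exact hne (hA.trans hB.symm)
end int

theorem stmt10 {n : ℕ} (G : SimpleGraph (Fin n)) [DecidableRel G.Adj]
    (hconn : G.Connected) (μ₁ μ₂ : ℝ) (hne : μ₁ ≠ μ₂)
    (hmain : ∀ μ, IsMainEig (signlessLaplacian G) μ ↔ (μ = μ₁ ∨ μ = μ₂)) :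
    (∀ v, (walkSum G v : ℝ) =
        -(G.degree v : ℝ) ^ 2 + (μ₁ + μ₂) * G.degree v - μ₁ * μ₂ / 2) ∧
    (∃ z : ℤ, (μ₁ + μ₂) = z) ∧ (∃ z : ℤ, (μ₁ * μ₂ / 2) = z) ∧
    0 < μ₁ + μ₂ ∧ 0 ≤ μ₁ * μ₂ / 2 ∧ (μ₁ + μ₂) ^ 2 - 8 * (μ₁ * μ₂ / 2) > 0 := by
  have hmain' : ∀ μ, IsMainEig (signlessLaplacian G) μ → (μ = μ₁ ∨ μ = μ₂) :=
    fun μ h => (hmain μ).mp h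
  have hfe : ∀ v, (walkSum G v : ℝ) =
      -(G.degree v : ℝ) ^ 2 + (μ₁ + μ₂) * G.degree v - μ₁ * μ₂ / 2 := by
    intro v
    have := sl_funceq G μ₁ μ₂ hmain' v
    nlinarith [this]
  obtain ⟨x1, hx10, hx1, _⟩ := (hmain μ₁).mpr (Or.inl rfl)
  obtain ⟨x2, hx20, hx2, _⟩ := (hmain μ₂).mpr (Or.inr rfl)
  have he1 : IsEig (signlessLaplacian G) μ₁ := ⟨x1, hx10, hx1⟩
  have he2 : IsEig (signlessLaplacian G) μ₂ := ⟨x2, hx20, hx2⟩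
  have hnn1 := sl_eig_nonneg G he1
  have hnn2 := sl_eig_nonneg G he2
  have hintA : IsIntegral ℤ (μ₁ + μ₂) :=
    (sl_eig_isIntegral G he1).add (sl_eig_isIntegral G he2)
  obtain ⟨v, w, hd⟩ := sl_nonregular G hconn μ₁ μ₂ hne hmain
  have hdR : (G.degree v : ℝ) ≠ (G.degree w : ℝ) := by exact_mod_cast hd
  set N : ℚ := ((walkSum G v : ℚ) + (G.degree v : ℚ) ^ 2
      - (walkSum G w : ℚ) - (G.degree w : ℚ) ^ 2)
      / ((G.degree v : ℚ) - (G.degree w : ℚ)) with hN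
  have haq : μ₁ + μ₂ = (N : ℝ) := by
    have e1 := hfe v
    have e2 := hfe w
    rw [hN]
    push_cast
    rw [eq_div_iff (sub_ne_zero.mpr hdR)]
    have expand : (μ₁ + μ₂) * ((G.degree v : ℝ) - (G.degree w : ℝ))
        = (μ₁ + μ₂) * (G.degree v : ℝ) - (μ₁ + μ₂) * (G.degree w : ℝ) := by ring
    linarith [expand]
  obtain ⟨za, hza⟩ := rat_integral_int (by rw [haq] at hintA; exact hintA)
  have haz : μ₁ + μ₂ = (za : ℝ) := by
    rw [haq, hza]; push_cast; rfl
  have hbz : ∃ z : ℤ, μ₁ * μ₂ / 2 = (z : ℝ) := by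
    refine ⟨-(walkSum G v : ℤ) - (G.degree v : ℤ) ^ 2 + za * (G.degree v : ℤ), ?_⟩
    have e1 := hfe v
    rw [haz] at e1
    push_cast
    linarith
  have hApos : 0 < μ₁ + μ₂ := by
    by_contra h
    push_neg at h
    have h1 : μ₁ = 0 := le_antisymm (by linarith) hnn1
    have h2 : μ₂ = 0 := le_antisymm (by linarith) hnn2
    exact hne (h1.trans h2.symm)
  have hBnn : 0 ≤ μ₁ * μ₂ / 2 := div_nonneg (mul_nonneg hnn1 hnn2) (by norm_num)
  have hdisc : (μ₁ + μ₂) ^ 2 - 8 * (μ₁ * μ₂ / 2) > 0 := by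
    have hsub : μ₁ - μ₂ ≠ 0 := sub_ne_zero.mpr hne
    have hp : 0 < (μ₁ - μ₂) ^ 2 :=
      lt_of_le_of_ne (sq_nonneg _) (Ne.symm (pow_ne_zero 2 hsub))
    nlinarith [hp]
  exact ⟨hfe, ⟨za, haz⟩, hbz, hApos, hBnn, hdisc⟩
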